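/- arXiv:2410.23250 — 6 statements merged into one kernel-verified Lean document; each statement's English description precedes it below -/
import Mathlib

section
/- For increasing events A, B ⊆ {0,1}^n and any configuration x ∈ {0,1}^n, the pair (A,B) occurs disjointly on (x, x̄) if and only if x ∈ A ∩ B̄, where x̄ denotes the coordinatewise complement of x and B̄ = {x̄ : x ∈ B}. -/
open Finset

/-- `(x, I)` is a witness for `A`: every configuration agreeing with `x` on `I` lies in `A`. -/
def IsWitness {n : ℕ} (A : Set (Fin n → Bool)) (x : Fin n → Bool) (I : Finset (Fin n)) : Prop :=
  ∀ y : Fin n → Bool, (∀ i ∈ I, y i = x i) → y ∈ A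

/-- `(A, B)` occurs disjointly on `(x, y)`: there are disjoint witness sets `I` for `A` in `x`
and `J` for `B` in `y`. -/
def OccursDisjointly {n : ℕ} (A B : Set (Fin n → Bool)) (x y : Fin n → Bool) : Prop :=
  ∃ I J : Finset (Fin n), Disjoint I J ∧ IsWitness A x I ∧ IsWitness B y J

/-- An event is increasing if it is upward closed in the coordinatewise order. -/
def IncreasingEvent {n : ℕ} (A : Set (Fin n → Bool)) : Prop :=
  ∀ x y : Fin n → Bool, (∀ i, x i ≤ y i) → x ∈ A → y ∈ A

/-- Coordinatewise colour flip. -/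
def flipConf {n : ℕ} (x : Fin n → Bool) : Fin n → Bool := fun i => !(x i)

/-- `B̄ = {x̄ : x ∈ B}`. -/
def flipSet {n : ℕ} (B : Set (Fin n → Bool)) : Set (Fin n → Bool) := flipConf '' B

/- A witness for an increasing event can always be taken to be the set of coordinates equal to
`true`: anything agreeing with `x` there dominates `x`. On `(x, x̄)` these sets are complementary,
hence disjoint. Conversely, any witness `(x, I)` for `A` forces `x ∈ A` itself. -/

def ones {n : ℕ} (x : Fin n → Bool) : Finset (Fin n) := univ.filter fun i => x i = true

theorem IsWitness.mem {n : ℕ} {A : Set (Fin n → Bool)} {x : Fin n → Bool} {I : Finset (Fin n)}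
    (h : IsWitness A x I) : x ∈ A :=
  h x fun _ _ => rfl

theorem le_of_eq_on_ones {n : ℕ} {x y : Fin n → Bool} (h : ∀ i ∈ ones x, y i = x i) (i : Fin n) :
    x i ≤ y i := by
  cases hx : x i
  · exact Bool.false_le _
  · rw [h i (by simp [ones, hx]), hx]

theorem IncreasingEvent.isWitness_ones {n : ℕ} {A : Set (Fin n → Bool)} (hA : IncreasingEvent A)
    {x : Fin n → Bool} (hx : x ∈ A) : IsWitness A x (ones x) :=
  fun _ hy => hA _ _ (le_of_eq_on_ones hy) hx

theorem disjoint_ones_flipConf {n : ℕ} (x : Fin n → Bool) : Disjoint (ones x) (ones (flipConf x)) := by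
  unfold ones flipConf
  exact Finset.disjoint_filter.2 fun i _ h => by simp [h]

theorem flipConf_flipConf {n : ℕ} (x : Fin n → Bool) : flipConf (flipConf x) = x := by
  funext i
  simp [flipConf]

theorem mem_flipSet_iff {n : ℕ} {B : Set (Fin n → Bool)} {x : Fin n → Bool} :
    x ∈ flipSet B ↔ flipConf x ∈ B := by
  constructor
  · rintro ⟨z, hz, rfl⟩
    rwa [flipConf_flipConf]
  · exact fun h => ⟨flipConf x, h, flipConf_flipConf x⟩

/-- For increasing events `A, B`, `(A,B)` occurs disjointly on `(x, x̄)` iff `x ∈ A ∩ B̄`. -/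
theorem occursDisjointly_flip_iff {n : ℕ} (A B : Set (Fin n → Bool))
    (hA : IncreasingEvent A) (hB : IncreasingEvent B) (x : Fin n → Bool) :
    OccursDisjointly A B x (flipConf x) ↔ x ∈ A ∩ flipSet B := by
  constructor
  · rintro ⟨I, J, -, hI, hJ⟩
    exact ⟨hI.mem, mem_flipSet_iff.2 hJ.mem⟩
  · rintro ⟨hxA, hxB⟩
    exact ⟨ones x, ones (flipConf x), disjoint_ones_flipConf x,
      hA.isWitness_ones hxA, hB.isWitness_ones (mem_flipSet_iff.1 hxB)⟩
end

section
/- For every function F : {0,1}^n × {0,1}^n → ℝ and every t ∈ [0,1], the derivative in t of E[F(ω, ω_t)] equals −(1/2) ∑_{i=1}^n E[∇_{ii} F(ω, ω_t)], where ω is uniform on {0,1}^n and ω_t is obtained from ω by flipping each coordinate independently with probability t. -/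
open Finset Function

/-- Joint law of `(ω, ω_t)`. -/
noncomputable def flipWeight (n : ℕ) (t : ℝ) (x y : Fin n → Bool) : ℝ :=
  (1 / 2 ^ n) * ∏ i, (if x i = y i then 1 - t else t)

/-- Expectation `E[H(ω, ω_t)]`. -/
noncomputable def Ept (n : ℕ) (t : ℝ) (H : (Fin n → Bool) → (Fin n → Bool) → ℝ) : ℝ :=
  ∑ x : Fin n → Bool, ∑ y : Fin n → Bool, flipWeight n t x y * H x y

/-- Second-order discrete derivative `∇_{ii}`. -/
def nablaII {n : ℕ} (F : (Fin n → Bool) → (Fin n → Bool) → ℝ) (i : Fin n)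
    (x y : Fin n → Bool) : ℝ :=
  F (update x i true) (update y i true) + F (update x i false) (update y i false)
    - F (update x i true) (update y i false) - F (update x i false) (update y i true)

/-- Summing a function over `update x i true` and `update x i false` doubles the sum. -/
lemma sum_update_bool {n : ℕ} (i : Fin n) (g : (Fin n → Bool) → ℝ) :
    (∑ x : Fin n → Bool, g (update x i true)) + (∑ x : Fin n → Bool, g (update x i false))
      = 2 * ∑ x : Fin n → Bool, g x := by
  have hinv : Function.Involutive (fun x : Fin n → Bool => update x i (!x i)) := by
    intro x
    simp [Function.update_idem, Function.update_self, Bool.not_not, Function.update_eq_self]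
  have hsum : ∑ x : Fin n → Bool, g (update x i (!x i)) = ∑ x : Fin n → Bool, g x :=
    Fintype.sum_equiv hinv.toPerm _ _ (fun x => rfl)
  have h3 : ∀ x : Fin n → Bool,
      g (update x i true) + g (update x i false) = g x + g (update x i (!x i)) := by
    intro x
    cases hx : x i with
    | false =>
        have hx' : update x i false = x := by rw [← hx]; exact Function.update_eq_self i x
        simp only [Bool.not_false]
        rw [hx']
        ring
    | true =>
        have hx' : update x i true = x := by rw [← hx]; exact Function.update_eq_self i x
        simp only [Bool.not_true]
        rw [hx']
  rw [← Finset.sum_add_distrib, Finset.sum_congr rfl fun x _ => h3 x,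
    Finset.sum_add_distrib, hsum]
  ring

/-- Quadrupling over the `i`-th coordinate in both arguments. -/
lemma quad_update {n : ℕ} (i : Fin n) (f : (Fin n → Bool) → (Fin n → Bool) → ℝ) :
    4 * (∑ x : Fin n → Bool, ∑ y : Fin n → Bool, f x y)
      = ∑ x : Fin n → Bool, ∑ y : Fin n → Bool,
          (f (update x i true) (update y i true) + f (update x i true) (update y i false)
            + f (update x i false) (update y i true)
            + f (update x i false) (update y i false)) := by
  have h1 := sum_update_bool i (fun x => ∑ y : Fin n → Bool, f x y)
  have h2 : ∀ z : Fin n → Bool,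
      (∑ y : Fin n → Bool, f z (update y i true)) + (∑ y : Fin n → Bool, f z (update y i false))
        = 2 * ∑ y : Fin n → Bool, f z y := fun z => sum_update_bool i (f z)
  have h3 : ∀ b : Bool,
      (∑ x : Fin n → Bool, ∑ y : Fin n → Bool, f (update x i b) (update y i true))
        + (∑ x : Fin n → Bool, ∑ y : Fin n → Bool, f (update x i b) (update y i false))
        = 2 * ∑ x : Fin n → Bool, ∑ y : Fin n → Bool, f (update x i b) y := by
    intro b
    rw [← Finset.sum_add_distrib, Finset.mul_sum]
    exact Finset.sum_congr rfl fun x _ => h2 _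
  simp only [Finset.sum_add_distrib]
  linear_combination (-2 : ℝ) * h1 - h3 true - h3 false

/-- The per-coordinate identity. -/
lemma per_i {n : ℕ} (F : (Fin n → Bool) → (Fin n → Bool) → ℝ) (t : ℝ) (i : Fin n) :
    (∑ x : Fin n → Bool, ∑ y : Fin n → Bool,
        (1 / 2 ^ n : ℝ) * ((∏ j ∈ Finset.univ.erase i, (if x j = y j then 1 - t else t))
          * (if x i = y i then (-1 : ℝ) else 1)) * F x y)
      = -(1/2) * Ept n t (fun x y => nablaII F i x y) := by
  set A : (Fin n → Bool) → (Fin n → Bool) → ℝ := fun x y =>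
    (1 / 2 ^ n : ℝ) * ((∏ j ∈ Finset.univ.erase i, (if x j = y j then 1 - t else t))
      * (if x i = y i then (-1 : ℝ) else 1)) * F x y with hA
  set B : (Fin n → Bool) → (Fin n → Bool) → ℝ := fun x y =>
    flipWeight n t x y * nablaII F i x y with hB
  have hqA := quad_update i A
  have hqB := quad_update i B
  have key : ∀ x y : Fin n → Bool,
      A (update x i true) (update y i true) + A (update x i true) (update y i false)
        + A (update x i false) (update y i true) + A (update x i false) (update y i false)
      = -(1/2) * (B (update x i true) (update y i true) + B (update x i true) (update y i false)
        + B (update x i false) (update y i true) + B (update x i false) (update y i false)) := by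
    intro x y
    have hP : ∀ c d : Bool,
        (∏ j ∈ Finset.univ.erase i,
          (if update x i c j = update y i d j then 1 - t else t))
        = ∏ j ∈ Finset.univ.erase i, (if x j = y j then 1 - t else t) := by
      intro c d
      refine Finset.prod_congr rfl fun j hj => ?_
      rw [Function.update_of_ne (Finset.ne_of_mem_erase hj),
        Function.update_of_ne (Finset.ne_of_mem_erase hj)]
    have hW : ∀ c d : Bool,
        (∏ j, (if update x i c j = update y i d j then 1 - t else t))
        = (if c = d then 1 - t else t)
            * ∏ j ∈ Finset.univ.erase i, (if x j = y j then 1 - t else t) := by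
      intro c d
      rw [← Finset.mul_prod_erase _ _ (Finset.mem_univ i), Function.update_self,
        Function.update_self, hP]
    have hN : ∀ c d : Bool,
        nablaII F i (update x i c) (update y i d) = nablaII F i x y := by
      intro c d
      simp only [nablaII, Function.update_idem]
    simp only [hA, hB, flipWeight, hW, hP, hN, Function.update_self]
    norm_num
    simp only [nablaII]
    ring
  have hAB : (∑ x : Fin n → Bool, ∑ y : Fin n → Bool,
      (A (update x i true) (update y i true) + A (update x i true) (update y i false)
        + A (update x i false) (update y i true) + A (update x i false) (update y i false)))
      = -(1/2) * ∑ x : Fin n → Bool, ∑ y : Fin n → Bool,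
      (B (update x i true) (update y i true) + B (update x i true) (update y i false)
        + B (update x i false) (update y i true) + B (update x i false) (update y i false)) := by
    rw [Finset.mul_sum]
    refine Finset.sum_congr rfl fun x _ => ?_
    rw [Finset.mul_sum]
    exact Finset.sum_congr rfl fun y _ => key x y
  have hEpt : Ept n t (fun x y => nablaII F i x y)
      = ∑ x : Fin n → Bool, ∑ y : Fin n → Bool, B x y := rfl
  rw [hEpt]
  linarith [hqA, hqB, hAB]

/-- The interpolation formula: `d/dt E[F(ω, ω_t)] = -(1/2) ∑_i E[∇_{ii}F(ω, ω_t)]`. -/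
theorem deriv_Ept {n : ℕ} (F : (Fin n → Bool) → (Fin n → Bool) → ℝ)
    (t : ℝ) (ht : t ∈ Set.Icc (0:ℝ) 1) :
    HasDerivAt (fun s => Ept n s F)
      (-(1/2) * ∑ i : Fin n, Ept n t (fun x y => nablaII F i x y)) t := by
  have hD : HasDerivAt (fun s => Ept n s F)
      (∑ x : Fin n → Bool, ∑ y : Fin n → Bool,
        ((1 / 2 ^ n : ℝ) * (∑ i : Fin n,
          (∏ j ∈ Finset.univ.erase i, (if x j = y j then 1 - t else t))
            * (if x i = y i then (-1 : ℝ) else 1))) * F x y) t := by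
    simp only [Ept, flipWeight]
    refine HasDerivAt.fun_sum fun x _ => HasDerivAt.fun_sum fun y _ => ?_
    have hprod : HasDerivAt (fun s => ∏ j, (if x j = y j then 1 - s else s))
        (∑ i : Fin n, (∏ j ∈ Finset.univ.erase i, (if x j = y j then 1 - t else t))
          * (if x i = y i then (-1 : ℝ) else 1)) t := by
      have := HasDerivAt.fun_finsetProd (u := Finset.univ)
        (f := fun (j : Fin n) (s : ℝ) => (if x j = y j then 1 - s else s))
        (f' := fun j => (if x j = y j then (-1 : ℝ) else 1)) (x := t) ?_
      · simpa [smul_eq_mul] using this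
      · intro j _
        by_cases h : x j = y j
        · simpa [h] using (hasDerivAt_id t).const_sub 1
        · simpa [h] using hasDerivAt_id' t
    exact (hprod.const_mul ((1:ℝ) / 2 ^ n)).mul_const (F x y)
  have hEq : (-(1/2) * ∑ i : Fin n, Ept n t (fun x y => nablaII F i x y))
      = ∑ x : Fin n → Bool, ∑ y : Fin n → Bool,
        ((1 / 2 ^ n : ℝ) * (∑ i : Fin n,
          (∏ j ∈ Finset.univ.erase i, (if x j = y j then 1 - t else t))
            * (if x i = y i then (-1 : ℝ) else 1))) * F x y := by
    have : ∀ x y : Fin n → Bool,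
        ((1 / 2 ^ n : ℝ) * (∑ i : Fin n,
          (∏ j ∈ Finset.univ.erase i, (if x j = y j then 1 - t else t))
            * (if x i = y i then (-1 : ℝ) else 1))) * F x y
        = ∑ i : Fin n, (1 / 2 ^ n : ℝ)
            * ((∏ j ∈ Finset.univ.erase i, (if x j = y j then 1 - t else t))
              * (if x i = y i then (-1 : ℝ) else 1)) * F x y := by
      intro x y
      rw [Finset.mul_sum, Finset.sum_mul]
    simp only [this]
    rw [Finset.mul_sum]
    rw [Finset.sum_congr rfl (fun i (_ : i ∈ Finset.univ) => (per_i F t i).symm)]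
    rw [Finset.sum_comm]
    refine Finset.sum_congr rfl fun x _ => ?_
    rw [Finset.sum_comm]
  rw [hEq]
  exact hD
end

section
/- (Key identity for Reimer interpolation) Let A, B ⊆ {0,1}^n be increasing events and let F(x,y) be the indicator that (A,B) occurs disjointly on (x,y). Then for every i ∈ [n] and all x, y ∈ {0,1}^n, −∇_{ii}F(x,y) = D_iF(x,y), where D_iF(x,y) = [F(x^i,y_i) − F(x_i,y_i)]·[F(x_i,y^i) − F(x_i,y_i)]. -/
open Finset

open Function

attribute [local instance] Classical.propDecidable

/-- Indicator of the event that `(A,B)` occurs disjointly on `(x,y)`. -/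
noncomputable def indDisj {n : ℕ} (A B : Set (Fin n → Bool)) (x y : Fin n → Bool) : ℝ :=
  if OccursDisjointly A B x y then 1 else 0

/-- `D_i F`. -/
def Dop {n : ℕ} (F : (Fin n → Bool) → (Fin n → Bool) → ℝ) (i : Fin n)
    (x y : Fin n → Bool) : ℝ :=
  (F (update x i true) (update y i false) - F (update x i false) (update y i false))
    * (F (update x i false) (update y i true) - F (update x i false) (update y i false))

/-- With `a, b, c, d` the values of a boolean function at `(1,1), (0,0), (1,0), (0,1)`, the
hypotheses say that it is monotone and that `a` holds only if `c` or `d` does. -/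
theorem neg_add_sub_sub_ite_eq_mul {R : Type*} [CommRing R] {a b c d : Prop}
    [Decidable a] [Decidable b] [Decidable c] [Decidable d]
    (hbc : b → c) (hbd : b → d) (hca : c → a) (hda : d → a) (hacd : a → c ∨ d) :
    -((if a then 1 else 0 : R) + (if b then 1 else 0) - (if c then 1 else 0) - if d then 1 else 0) =
      ((if c then 1 else 0) - if b then 1 else 0) * ((if d then 1 else 0) - if b then 1 else 0) := by
  split_ifs <;> first | (exfalso; tauto) | ring

section Witness

variable {n : ℕ} {A B : Set (Fin n → Bool)}

theorem IsWitness.mono (hA : IncreasingEvent A) {x x' : Fin n → Bool} (hxx' : x ≤ x')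
    {I : Finset (Fin n)} (hw : IsWitness A x I) : IsWitness A x' I := by
  intro z hz
  -- lower `z` to `x` on `I`; the result agrees with `x` on `I` and lies below `z`
  refine hA (fun j => if j ∈ I then x j else z j) z (fun j => ?_) (hw _ fun j hj => if_pos hj)
  split_ifs with hj
  · exact (hz j hj).symm ▸ hxx' j
  · exact le_rfl

theorem IsWitness.update_of_notMem {x : Fin n → Bool} {I : Finset (Fin n)} {i : Fin n}
    (hi : i ∉ I) (b : Bool) (hw : IsWitness A x I) : IsWitness A (update x i b) I :=
  fun z hz => hw z fun j hj => by
    rw [hz j hj, update_of_ne (ne_of_mem_of_not_mem hj hi)]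

theorem OccursDisjointly.mono (hA : IncreasingEvent A) (hB : IncreasingEvent B)
    {x x' y y' : Fin n → Bool} (hx : x ≤ x') (hy : y ≤ y') (h : OccursDisjointly A B x y) :
    OccursDisjointly A B x' y' := by
  obtain ⟨I, J, hIJ, hI, hJ⟩ := h
  exact ⟨I, J, hIJ, hI.mono hA hx, hJ.mono hB hy⟩

/-- A coordinate cannot be used by both witnesses, so it can be changed in one of the two
configurations. -/
theorem OccursDisjointly.update_or_update {x y : Fin n → Bool}
    (h : OccursDisjointly A B x y) (i : Fin n) (b : Bool) :
    OccursDisjointly A B x (update y i b) ∨ OccursDisjointly A B (update x i b) y := by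
  obtain ⟨I, J, hIJ, hI, hJ⟩ := h
  by_cases hiJ : i ∈ J
  · exact .inr ⟨I, J, hIJ, hI.update_of_notMem (disjoint_right.mp hIJ hiJ) b, hJ⟩
  · exact .inl ⟨I, J, hIJ, hI, hJ.update_of_notMem hiJ b⟩

end Witness

theorem update_false_le_update_true {ι : Type*} [DecidableEq ι] (x : ι → Bool) (i : ι) :
    update x i false ≤ update x i true :=
  update_le_update_iff.mpr ⟨Bool.false_le _, fun _ _ => le_rfl⟩

/-- Key identity for the Reimer interpolation: `-∇_{ii}F = D_i F` for the indicator `F`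
of disjoint occurrence of increasing events. -/
theorem neg_nablaII_eq_D {n : ℕ} (A B : Set (Fin n → Bool))
    (hA : IncreasingEvent A) (hB : IncreasingEvent B) (i : Fin n) (x y : Fin n → Bool) :
    -nablaII (indDisj A B) i x y = Dop (indDisj A B) i x y := by
  have hx := update_false_le_update_true x i
  have hy := update_false_le_update_true y i
  have hsplit (h : OccursDisjointly A B (update x i true) (update y i true)) :
      OccursDisjointly A B (update x i true) (update y i false) ∨
        OccursDisjointly A B (update x i false) (update y i true) := by
    simpa only [update_idem] using h.update_or_update i false
  exact neg_add_sub_sub_ite_eq_mul (·.mono hA hB hx le_rfl) (·.mono hA hB le_rfl hy)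
    (·.mono hA hB le_rfl hy) (·.mono hA hB hx le_rfl) hsplit
end

section
/- (FKG property of the noised pair) Let F, G : {0,1}^n × {0,1}^n → ℝ be both increasing (as functions on {0,1}^{2n}). Then for every t ∈ [0,1/2], E[F(ω, ω_t) G(ω, ω_t)] ≥ E[F(ω, ω_t)] E[G(ω, ω_t)], where ω is uniform and ω_t is obtained from ω by flipping each coordinate independently with probability t. -/
open Finset

/-- A function on `{0,1}^n × {0,1}^n` is increasing if it is monotone for the
coordinatewise order on `{0,1}^{2n}`. -/
def IncreasingPair {n : ℕ} (F : (Fin n → Bool) → (Fin n → Bool) → ℝ) : Prop :=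
  ∀ x y x' y' : Fin n → Bool,
    (∀ i, x i ≤ x' i) → (∀ i, y i ≤ y' i) → F x y ≤ F x' y'

lemma boolInf : ∀ a b : Bool, a ⊓ b = (a && b) := by decide
lemma boolSup : ∀ a b : Bool, a ⊔ b = (a || b) := by decide

lemma wcond (t : ℝ) (h1 : t ≤ 1 - t) (a b a' b' : Bool) :
    (if a = b then 1 - t else t) * (if a' = b' then 1 - t else t) ≤
      (if (a && a') = (b && b') then 1 - t else t) *
        (if (a || a') = (b || b') then 1 - t else t) := by
  rcases a <;> rcases b <;> rcases a' <;> rcases b' <;> simp <;> nlinarith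

lemma flipWeight_mass (n : ℕ) (t : ℝ) :
    ∑ x : Fin n → Bool, ∑ y : Fin n → Bool, flipWeight n t x y = 1 := by
  have hy : ∀ x : Fin n → Bool,
      ∑ y : Fin n → Bool, ∏ i, (if x i = y i then 1 - t else t) = 1 := by
    intro x
    have h : ∑ y : Fin n → Bool, ∏ i, (fun i b => if x i = b then 1 - t else t) i (y i)
        = ∏ i, ∑ b, (if x i = b then 1 - t else t) := by
      rw [Finset.prod_univ_sum, ← Fintype.piFinset_univ]
    rw [h]
    apply Finset.prod_eq_one
    intro i _
    cases x i <;> simp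
  simp only [flipWeight, ← Finset.mul_sum, hy, mul_one, Finset.sum_const,
    Finset.card_univ]
  simp [Fintype.card_fun]

lemma wnonneg (t : ℝ) (h0 : 0 ≤ t) (h1 : t ≤ 1 - t) (a b : Bool) :
    0 ≤ (if a = b then 1 - t else t) := by
  split <;> linarith

/-- FKG property of the noised pair: for increasing `F, G` and `t ∈ [0, 1/2]`,
`E[F(ω,ω_t) G(ω,ω_t)] ≥ E[F(ω,ω_t)] E[G(ω,ω_t)]`. -/
theorem fkg_noised_pair {n : ℕ} (F G : (Fin n → Bool) → (Fin n → Bool) → ℝ)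
    (hF : IncreasingPair F) (hG : IncreasingPair G)
    (t : ℝ) (ht : t ∈ Set.Icc (0:ℝ) (1/2)) :
    Ept n t (fun x y => F x y * G x y) ≥ Ept n t F * Ept n t G := by
  obtain ⟨h0, h12⟩ := ht
  have h1 : t ≤ 1 - t := by linarith
  set μ : ((Fin n → Bool) × (Fin n → Bool)) → ℝ :=
    fun p => flipWeight n t p.1 p.2 with hμdef
  have hc : (0:ℝ) ≤ 1 / 2 ^ n := by positivity
  have hμ0 : 0 ≤ μ := by
    intro p
    exact mul_nonneg hc (Finset.prod_nonneg fun i _ => wnonneg t h0 h1 _ _)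
  have hμcond : ∀ p q, μ p * μ q ≤ μ (p ⊓ q) * μ (p ⊔ q) := by
    intro p q
    simp only [hμdef, flipWeight]
    have hp : (∏ i, (if p.1 i = p.2 i then 1 - t else t)) *
        (∏ i, (if q.1 i = q.2 i then 1 - t else t)) ≤
        (∏ i, (if (p ⊓ q).1 i = (p ⊓ q).2 i then 1 - t else t)) *
        (∏ i, (if (p ⊔ q).1 i = (p ⊔ q).2 i then 1 - t else t)) := by
      rw [← Finset.prod_mul_distrib, ← Finset.prod_mul_distrib]
      refine Finset.prod_le_prod ?_ (fun i _ => ?_)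
      · exact fun i _ => mul_nonneg (wnonneg t h0 h1 _ _) (wnonneg t h0 h1 _ _)
      have e1 : (p ⊓ q).1 i = (p.1 i && q.1 i) := by
        show (p.1 ⊓ q.1) i = _; rw [Pi.inf_apply, boolInf]
      have e2 : (p ⊓ q).2 i = (p.2 i && q.2 i) := by
        show (p.2 ⊓ q.2) i = _; rw [Pi.inf_apply, boolInf]
      have e3 : (p ⊔ q).1 i = (p.1 i || q.1 i) := by
        show (p.1 ⊔ q.1) i = _; rw [Pi.sup_apply, boolSup]
      have e4 : (p ⊔ q).2 i = (p.2 i || q.2 i) := by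
        show (p.2 ⊔ q.2) i = _; rw [Pi.sup_apply, boolSup]
      rw [e1, e2, e3, e4]
      exact wcond t h1 _ _ _ _
    calc ((1:ℝ) / 2 ^ n * ∏ i, (if p.1 i = p.2 i then 1 - t else t)) *
        (1 / 2 ^ n * ∏ i, (if q.1 i = q.2 i then 1 - t else t))
        = (1 / 2 ^ n * (1 / 2 ^ n)) * ((∏ i, (if p.1 i = p.2 i then 1 - t else t)) *
            ∏ i, (if q.1 i = q.2 i then 1 - t else t)) := by ring
      _ ≤ (1 / 2 ^ n * (1 / 2 ^ n)) * ((∏ i, (if (p ⊓ q).1 i = (p ⊓ q).2 i then 1 - t else t)) *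
            ∏ i, (if (p ⊔ q).1 i = (p ⊔ q).2 i then 1 - t else t)) :=
          mul_le_mul_of_nonneg_left hp (by positivity)
      _ = (1 / 2 ^ n * ∏ i, (if (p ⊓ q).1 i = (p ⊓ q).2 i then 1 - t else t)) *
            (1 / 2 ^ n * ∏ i, (if (p ⊔ q).1 i = (p ⊔ q).2 i then 1 - t else t)) := by ring
  have hmass : ∑ p, μ p = 1 := by
    rw [Fintype.sum_prod_type]; exact flipWeight_mass n t
  have hEpt : ∀ H : (Fin n → Bool) → (Fin n → Bool) → ℝ,
      Ept n t H = ∑ p, μ p * H p.1 p.2 := by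
    intro H; rw [Ept, Fintype.sum_prod_type]
  obtain ⟨C, hC⟩ := Finite.exists_le fun p : (Fin n → Bool) × (Fin n → Bool) => -F p.1 p.2
  obtain ⟨D, hD⟩ := Finite.exists_le fun p : (Fin n → Bool) × (Fin n → Bool) => -G p.1 p.2
  set f : ((Fin n → Bool) × (Fin n → Bool)) → ℝ := fun p => F p.1 p.2 + C with hfdef
  set g : ((Fin n → Bool) × (Fin n → Bool)) → ℝ := fun p => G p.1 p.2 + D with hgdef
  have hf0 : 0 ≤ f := fun p => by have := hC p; show (0:ℝ) ≤ F p.1 p.2 + C; linarith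
  have hg0 : 0 ≤ g := fun p => by have := hD p; show (0:ℝ) ≤ G p.1 p.2 + D; linarith
  have hfm : Monotone f := fun p q hpq =>
    add_le_add_left (hF _ _ _ _ (fun i => hpq.1 i) (fun i => hpq.2 i)) C
  have hgm : Monotone g := fun p q hpq =>
    add_le_add_left (hG _ _ _ _ (fun i => hpq.1 i) (fun i => hpq.2 i)) D
  have key := fkg (μ := μ) (f := f) (g := g) hμ0 hf0 hg0 hfm hgm hμcond
  have hsf : ∑ p, μ p * f p = Ept n t F + C := by
    rw [hEpt F]
    simp only [hfdef, mul_add, Finset.sum_add_distrib, ← Finset.sum_mul, hmass, one_mul]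
  have hsg : ∑ p, μ p * g p = Ept n t G + D := by
    rw [hEpt G]
    simp only [hgdef, mul_add, Finset.sum_add_distrib, ← Finset.sum_mul, hmass, one_mul]
  have hsfg : ∑ p, μ p * (f p * g p)
      = Ept n t (fun x y => F x y * G x y) + D * Ept n t F + C * Ept n t G + C * D := by
    rw [hEpt (fun x y => F x y * G x y), hEpt F, hEpt G]
    have : ∀ p, μ p * (f p * g p)
        = μ p * (F p.1 p.2 * G p.1 p.2) + D * (μ p * F p.1 p.2)
          + C * (μ p * G p.1 p.2) + (C * D) * μ p := by
      intro p; simp only [hfdef, hgdef]; ring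
    simp only [this, Finset.sum_add_distrib, ← Finset.mul_sum, hmass]
    ring
  rw [hsf, hsg, hmass, hsfg, one_mul] at key
  nlinarith [key]
end

section
/- (Mixed-monotone FKG for the noised pair) Fix t ∈ [0,1/2] and pairwise disjoint sets A, B, S, T ⊆ [n]. Let F, G : {0,1}^n × {0,1}^n → ℝ be such that F(ω, ω_t) is measurable with respect to the coordinates in A ∪ S ∪ T, G(ω, ω_t) is measurable with respect to the coordinates in B ∪ S ∪ T, and F, G are both S-increasing and both T-decreasing. Then E[F(ω, ω_t) G(ω, ω_t)] ≥ E[F(ω, ω_t)] E[G(ω, ω_t)]. -/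
open Finset Function

/-- `F` is `S`-increasing. -/
def SIncreasing {n : ℕ} (S : Finset (Fin n)) (F : (Fin n → Bool) → (Fin n → Bool) → ℝ) : Prop :=
  ∀ x y : Fin n → Bool, ∀ i ∈ S,
    F (update x i false) y ≤ F (update x i true) y ∧
    F x (update y i false) ≤ F x (update y i true)

/-- `F` is `T`-decreasing. -/
def SDecreasing {n : ℕ} (T : Finset (Fin n)) (F : (Fin n → Bool) → (Fin n → Bool) → ℝ) : Prop :=
  ∀ x y : Fin n → Bool, ∀ i ∈ T,
    F (update x i true) y ≤ F (update x i false) y ∧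
    F x (update y i true) ≤ F x (update y i false)

/-- `F(ω, ω_t)` depends only on the coordinates in `C`. -/
def CoordDependsOn {n : ℕ} (C : Finset (Fin n)) (F : (Fin n → Bool) → (Fin n → Bool) → ℝ) : Prop :=
  ∀ x y x' y' : Fin n → Bool,
    (∀ i ∈ C, x i = x' i ∧ y i = y' i) → F x y = F x' y'

namespace MFKG
variable {n : ℕ}

noncomputable def u (t : ℝ) (p : Bool × Bool) : ℝ := (1/2) * (if p.1 = p.2 then 1 - t else t)

lemma u_nonneg {t : ℝ} (ht : t ∈ Set.Icc (0:ℝ) (1/2)) (p : Bool × Bool) : 0 ≤ u t p := by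
  obtain ⟨h0, h1⟩ := ht
  unfold u; split <;> nlinarith

lemma sum_u (t : ℝ) : ∑ p : Bool × Bool, u t p = 1 := by
  simp [u, Fintype.sum_prod_type, Fintype.sum_bool]
  ring

lemma flipWeight_eq (t : ℝ) (x y : Fin n → Bool) :
    flipWeight n t x y = ∏ i, u t (x i, y i) := by
  simp only [flipWeight, u, Finset.prod_mul_distrib, Finset.prod_const, Finset.card_univ,
    Fintype.card_fin]
  rw [div_pow, one_pow]

lemma flipWeight_nonneg {t : ℝ} (ht : t ∈ Set.Icc (0:ℝ) (1/2)) (x y : Fin n → Bool) :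
    0 ≤ flipWeight n t x y := by
  rw [flipWeight_eq]
  exact Finset.prod_nonneg fun i _ => u_nonneg ht _

lemma sum_pi_prod {γ : Type*} [Fintype γ] [DecidableEq γ] (h : Fin n → γ → ℝ) :
    ∑ z : Fin n → γ, ∏ i, h i (z i) = ∏ i, ∑ c, h i c := by
  rw [Finset.prod_univ_sum, Fintype.piFinset_univ]

lemma sum_flipWeight (t : ℝ) :
    ∑ x : Fin n → Bool, ∑ y : Fin n → Bool, flipWeight n t x y = 1 := by
  have h : ∀ x y : Fin n → Bool, flipWeight n t x y = ∏ i, u t (x i, y i) := flipWeight_eq t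
  calc ∑ x : Fin n → Bool, ∑ y : Fin n → Bool, flipWeight n t x y
      = ∑ p : (Fin n → Bool) × (Fin n → Bool), ∏ i, u t (p.1 i, p.2 i) := by
        rw [Fintype.sum_prod_type]; simp_rw [h]
    _ = ∑ q : Fin n → Bool × Bool, ∏ i, u t (q i) := by
        apply Fintype.sum_bijective
          (fun p : (Fin n → Bool) × (Fin n → Bool) => fun i => (p.1 i, p.2 i))
        · constructor
          · intro p p' hpp
            ext i
            · exact congrArg Prod.fst (congrFun hpp i)
            · exact congrArg Prod.snd (congrFun hpp i)
          · intro q; exact ⟨(fun i => (q i).1, fun i => (q i).2), rfl⟩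
        · intro p; rfl
    _ = ∏ i : Fin n, ∑ c : Bool × Bool, u t c := sum_pi_prod _
    _ = 1 := by simp [sum_u]

lemma sum_flipWeight' (t : ℝ) :
    ∑ p : (Fin n → Bool) × (Fin n → Bool), flipWeight n t p.1 p.2 = 1 := by
  rw [Fintype.sum_prod_type]; exact sum_flipWeight t

noncomputable def W (t : ℝ) (S : Finset (Fin n)) (i : Fin n) (p : Bool × Bool) : ℝ :=
  if i ∈ S then u t p else (if p = (false, false) then 1 else 0)

noncomputable def Mu (t : ℝ) (S : Finset (Fin n)) (z : Fin n → Bool × Bool) : ℝ :=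
  ∏ i, W t S i (z i)

lemma bool_inf (a b : Bool) : a ⊓ b = (a && b) := by revert a b; decide
lemma bool_sup (a b : Bool) : a ⊔ b = (a || b) := by revert a b; decide

lemma u_supermod {t : ℝ} (ht : t ∈ Set.Icc (0:ℝ) (1/2)) (p q : Bool × Bool) :
    u t p * u t q ≤ u t (p ⊓ q) * u t (q ⊔ p) := by
  obtain ⟨h0, h1⟩ := ht
  obtain ⟨a, b⟩ := p; obtain ⟨c, d⟩ := q
  simp only [Prod.inf_def, Prod.sup_def, bool_inf, bool_sup, u]
  cases a <;> cases b <;> cases c <;> cases d <;> simp <;> nlinarith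

lemma W_nonneg {t : ℝ} (ht : t ∈ Set.Icc (0:ℝ) (1/2)) (S : Finset (Fin n)) (i : Fin n)
    (p : Bool × Bool) : 0 ≤ W t S i p := by
  obtain ⟨h0, h1⟩ := ht
  unfold W u
  split
  · split <;> nlinarith
  · split <;> norm_num

lemma W_supermod {t : ℝ} (ht : t ∈ Set.Icc (0:ℝ) (1/2)) (S : Finset (Fin n)) (i : Fin n)
    (p q : Bool × Bool) : W t S i p * W t S i q ≤ W t S i (p ⊓ q) * W t S i (p ⊔ q) := by
  unfold W
  split
  · have := u_supermod ht p q
    rw [sup_comm] at this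
    exact this
  · obtain ⟨a, b⟩ := p; obtain ⟨c, d⟩ := q
    simp only [Prod.inf_def, Prod.sup_def, bool_inf, bool_sup]
    cases a <;> cases b <;> cases c <;> cases d <;> simp

lemma Mu_nonneg {t : ℝ} (ht : t ∈ Set.Icc (0:ℝ) (1/2)) (S : Finset (Fin n))
    (z : Fin n → Bool × Bool) : 0 ≤ Mu t S z :=
  Finset.prod_nonneg fun i _ => W_nonneg ht S i _

lemma Mu_supermod {t : ℝ} (ht : t ∈ Set.Icc (0:ℝ) (1/2)) (S : Finset (Fin n))
    (z z' : Fin n → Bool × Bool) :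
    Mu t S z * Mu t S z' ≤ Mu t S (z ⊓ z') * Mu t S (z ⊔ z') := by
  unfold Mu
  rw [← Finset.prod_mul_distrib, ← Finset.prod_mul_distrib]
  apply Finset.prod_le_prod
  · intro i _; exact mul_nonneg (W_nonneg ht S i _) (W_nonneg ht S i _)
  · intro i _
    exact W_supermod ht S i (z i) (z' i)

lemma sum_W {t : ℝ} (S : Finset (Fin n)) (i : Fin n) : ∑ p : Bool × Bool, W t S i p = 1 := by
  unfold W
  split
  · simp [u, Fintype.sum_prod_type, Fintype.sum_bool]; ring
  · simp [Fintype.sum_prod_type, Fintype.sum_bool]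

lemma sum_Mu (t : ℝ) (S : Finset (Fin n)) : ∑ z : Fin n → Bool × Bool, Mu t S z = 1 := by
  unfold Mu
  rw [sum_pi_prod]
  simp [sum_W]

def ov1 (S : Finset (Fin n)) (z : Fin n → Bool × Bool) (x : Fin n → Bool) : Fin n → Bool :=
  fun i => if i ∈ S then (z i).1 else x i

def ov2 (S : Finset (Fin n)) (z : Fin n → Bool × Bool) (y : Fin n → Bool) : Fin n → Bool :=
  fun i => if i ∈ S then (z i).2 else y i

lemma Ept_eq (t : ℝ) (H : (Fin n → Bool) → (Fin n → Bool) → ℝ) :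
    Ept n t H = ∑ p : (Fin n → Bool) × (Fin n → Bool), flipWeight n t p.1 p.2 * H p.1 p.2 := by
  rw [Ept, Fintype.sum_prod_type]

/-- The swap involution exchanging the `S`-coordinates of `z` with those of `(x, y)`. -/
def sw (S : Finset (Fin n)) (P : (Fin n → Bool × Bool) × (Fin n → Bool) × (Fin n → Bool)) :
    (Fin n → Bool × Bool) × (Fin n → Bool) × (Fin n → Bool) :=
  ⟨fun i => if i ∈ S then (P.2.1 i, P.2.2 i) else P.1 i,
   fun i => if i ∈ S then (P.1 i).1 else P.2.1 i,
   fun i => if i ∈ S then (P.1 i).2 else P.2.2 i⟩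

lemma sw_invol (S : Finset (Fin n)) (P) : sw S (sw S P) = P := by
  obtain ⟨z, x, y⟩ := P
  unfold sw
  refine Prod.ext ?_ (Prod.ext ?_ ?_) <;> funext i <;> by_cases h : i ∈ S <;> simp [h]

lemma key1 (t : ℝ) (S : Finset (Fin n)) (H : (Fin n → Bool) → (Fin n → Bool) → ℝ) :
    ∑ z : Fin n → Bool × Bool, Mu t S z * Ept n t (fun x y => H (ov1 S z x) (ov2 S z y))
      = Ept n t H := by
  have hbij : Function.Bijective (sw S) :=
    Function.Involutive.bijective (sw_invol S)
  calc ∑ z : Fin n → Bool × Bool, Mu t S z * Ept n t (fun x y => H (ov1 S z x) (ov2 S z y))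
      = ∑ P : (Fin n → Bool × Bool) × (Fin n → Bool) × (Fin n → Bool),
          Mu t S P.1 * (flipWeight n t P.2.1 P.2.2 * H (ov1 S P.1 P.2.1) (ov2 S P.1 P.2.2)) := by
        rw [Fintype.sum_prod_type]
        congr 1; funext z
        rw [Ept_eq, Finset.mul_sum, Fintype.sum_prod_type]
    _ = ∑ P : (Fin n → Bool × Bool) × (Fin n → Bool) × (Fin n → Bool),
          Mu t S P.1 * (flipWeight n t P.2.1 P.2.2 * H P.2.1 P.2.2) := by
        apply Fintype.sum_bijective (sw S) hbij
        intro P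
        obtain ⟨z, x, y⟩ := P
        have hw : Mu t S z * flipWeight n t x y
            = Mu t S (fun i => if i ∈ S then (x i, y i) else z i)
              * flipWeight n t (fun i => if i ∈ S then (z i).1 else x i)
                (fun i => if i ∈ S then (z i).2 else y i) := by
          rw [flipWeight_eq, flipWeight_eq, Mu, Mu, ← Finset.prod_mul_distrib,
            ← Finset.prod_mul_distrib]
          apply Finset.prod_congr rfl
          intro i _
          by_cases h : i ∈ S
          · simp [h, W, mul_comm]
          · simp [h, W]
        show Mu t S z * (flipWeight n t x y * H (ov1 S z x) (ov2 S z y)) =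
          Mu t S (fun i => if i ∈ S then (x i, y i) else z i)
            * (flipWeight n t (fun i => if i ∈ S then (z i).1 else x i)
                (fun i => if i ∈ S then (z i).2 else y i) * H (ov1 S z x) (ov2 S z y))
        rw [← mul_assoc, ← mul_assoc, hw]
    _ = Ept n t H := by
        rw [Fintype.sum_prod_type]
        simp_rw [← Finset.mul_sum]
        rw [← Finset.sum_mul, sum_Mu, one_mul, Ept_eq]

/-- The involution exchanging the `B`-coordinates of two independent copies. -/
def tw (B : Finset (Fin n))
    (P : ((Fin n → Bool) × (Fin n → Bool)) × ((Fin n → Bool) × (Fin n → Bool))) :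
    ((Fin n → Bool) × (Fin n → Bool)) × ((Fin n → Bool) × (Fin n → Bool)) :=
  ⟨⟨fun i => if i ∈ B then P.2.1 i else P.1.1 i, fun i => if i ∈ B then P.2.2 i else P.1.2 i⟩,
   ⟨fun i => if i ∈ B then P.1.1 i else P.2.1 i, fun i => if i ∈ B then P.1.2 i else P.2.2 i⟩⟩

lemma tw_invol (B : Finset (Fin n)) (P) : tw B (tw B P) = P := by
  obtain ⟨⟨x, y⟩, ⟨x', y'⟩⟩ := P
  unfold tw
  refine Prod.ext (Prod.ext ?_ ?_) (Prod.ext ?_ ?_) <;> funext i <;>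
    by_cases h : i ∈ B <;> simp [h]

lemma indep (t : ℝ) (A B : Finset (Fin n)) (hAB : Disjoint A B)
    (H₁ H₂ : (Fin n → Bool) → (Fin n → Bool) → ℝ)
    (h1 : CoordDependsOn A H₁) (h2 : CoordDependsOn B H₂) :
    Ept n t (fun x y => H₁ x y * H₂ x y) = Ept n t H₁ * Ept n t H₂ := by
  have hq := sum_flipWeight' (n := n) t
  have hbij : Function.Bijective (tw B) := Function.Involutive.bijective (tw_invol B)
  rw [Ept_eq, Ept_eq, Ept_eq, Finset.sum_mul_sum, ← Fintype.sum_prod_type']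
  have step := Fintype.sum_bijective (tw B) hbij
    (fun P : ((Fin n → Bool) × (Fin n → Bool)) × ((Fin n → Bool) × (Fin n → Bool)) =>
      flipWeight n t P.1.1 P.1.2 * H₁ P.1.1 P.1.2 * (flipWeight n t P.2.1 P.2.2 * H₂ P.2.1 P.2.2))
    (fun P => flipWeight n t P.1.1 P.1.2 * flipWeight n t P.2.1 P.2.2
      * (H₁ P.1.1 P.1.2 * H₂ P.1.1 P.1.2)) ?_
  · rw [step]
    have : (∑ P : ((Fin n → Bool) × (Fin n → Bool)) × ((Fin n → Bool) × (Fin n → Bool)),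
        flipWeight n t P.1.1 P.1.2 * flipWeight n t P.2.1 P.2.2
          * (H₁ P.1.1 P.1.2 * H₂ P.1.1 P.1.2))
        = (∑ p : (Fin n → Bool) × (Fin n → Bool),
            flipWeight n t p.1 p.2 * (H₁ p.1 p.2 * H₂ p.1 p.2))
          * ∑ q : (Fin n → Bool) × (Fin n → Bool), flipWeight n t q.1 q.2 := by
      rw [Finset.sum_mul_sum, ← Fintype.sum_prod_type']
      congr 1; funext P; ring
    rw [this, hq, mul_one]
  · rintro ⟨⟨x, y⟩, ⟨x', y'⟩⟩
    have hflip : flipWeight n t x y * flipWeight n t x' y'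
        = flipWeight n t (fun i => if i ∈ B then x' i else x i)
            (fun i => if i ∈ B then y' i else y i)
          * flipWeight n t (fun i => if i ∈ B then x i else x' i)
            (fun i => if i ∈ B then y i else y' i) := by
      rw [flipWeight_eq, flipWeight_eq, flipWeight_eq, flipWeight_eq,
        ← Finset.prod_mul_distrib, ← Finset.prod_mul_distrib]
      apply Finset.prod_congr rfl
      intro i _
      by_cases h : i ∈ B <;> simp [h, mul_comm]
    have h1' : H₁ x y = H₁ (fun i => if i ∈ B then x' i else x i)
        (fun i => if i ∈ B then y' i else y i) := by
      apply h1
      intro i hi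
      have : i ∉ B := Finset.disjoint_left.mp hAB hi
      simp [this]
    have h2' : H₂ x' y' = H₂ (fun i => if i ∈ B then x' i else x i)
        (fun i => if i ∈ B then y' i else y i) := by
      apply h2
      intro i hi
      simp [hi]
    show flipWeight n t x y * H₁ x y * (flipWeight n t x' y' * H₂ x' y') = _
    rw [h1', h2']
    unfold tw
    dsimp only
    rw [← hflip]
    ring

lemma mono_aux {S : Finset (Fin n)} {F : (Fin n → Bool) → (Fin n → Bool) → ℝ}
    (hFS : SIncreasing S F) (s : Finset (Fin n)) (hs : s ⊆ S) :
    ∀ X X' Y Y' : Fin n → Bool, (∀ i, X i ≠ X' i → i ∈ s) → (∀ i, Y i ≠ Y' i → i ∈ s) →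
      X ≤ X' → Y ≤ Y' → F X Y ≤ F X' Y' := by
  induction s using Finset.induction_on with
  | empty =>
    intro X X' Y Y' hX hY _ _
    have h1 : X = X' := by
      funext i; by_contra h; exact absurd (hX i h) (Finset.notMem_empty i)
    have h2 : Y = Y' := by
      funext i; by_contra h; exact absurd (hY i h) (Finset.notMem_empty i)
    rw [h1, h2]
  | @insert a s ha ih =>
    intro X X' Y Y' hX hY hXle hYle
    have haS : a ∈ S := hs (Finset.mem_insert_self a s)
    have hsS : s ⊆ S := fun i hi => hs (Finset.mem_insert_of_mem hi)
    set X₁ := update X a (X' a) with hX₁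
    set Y₁ := update Y a (Y' a) with hY₁
    have step1 : F X Y ≤ F X₁ Y := by
      by_cases h : X a = X' a
      · rw [hX₁, ← h, Function.update_eq_self]
      · have hle : X a ≤ X' a := hXle a
        have hXa : X a = false := by
          cases hXa : X a
          · rfl
          · cases hX'a : X' a
            · rw [hXa, hX'a] at hle; exact absurd hle (by decide)
            · exact absurd (hXa.trans hX'a.symm) h
        have hX'a : X' a = true := by
          cases hX'a : X' a
          · exact absurd (hXa.trans hX'a.symm) h
          · rfl
        have h1 : update X a false = X := by rw [← hXa]; exact Function.update_eq_self a X
        have h2 : X₁ = update X a true := by rw [hX₁, hX'a]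
        rw [h2, ← h1, Function.update_idem]
        exact (hFS X Y a haS).1
    have step2 : F X₁ Y ≤ F X₁ Y₁ := by
      by_cases h : Y a = Y' a
      · rw [hY₁, ← h, Function.update_eq_self]
      · have hle : Y a ≤ Y' a := hYle a
        have hYa : Y a = false := by
          cases hYa : Y a
          · rfl
          · cases hY'a : Y' a
            · rw [hYa, hY'a] at hle; exact absurd hle (by decide)
            · exact absurd (hYa.trans hY'a.symm) h
        have hY'a : Y' a = true := by
          cases hY'a : Y' a
          · exact absurd (hYa.trans hY'a.symm) h
          · rfl
        have h1 : update Y a false = Y := by rw [← hYa]; exact Function.update_eq_self a Y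
        have h2 : Y₁ = update Y a true := by rw [hY₁, hY'a]
        rw [h2, ← h1, Function.update_idem]
        exact (hFS X₁ Y a haS).2
    have step3 : F X₁ Y₁ ≤ F X' Y' := by
      apply ih hsS
      · intro i hi
        have hia : i ≠ a := by
          intro h; rw [h] at hi; exact hi (Function.update_self a (X' a) X)
        rw [hX₁] at hi
        rw [Function.update_of_ne hia] at hi
        rcases Finset.mem_insert.mp (hX i hi) with h | h
        · exact absurd h hia
        · exact h
      · intro i hi
        have hia : i ≠ a := by
          intro h; rw [h] at hi; exact hi (Function.update_self a (Y' a) Y)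
        rw [hY₁, Function.update_of_ne hia] at hi
        rcases Finset.mem_insert.mp (hY i hi) with h | h
        · exact absurd h hia
        · exact h
      · intro i
        by_cases h : i = a
        · rw [hX₁, h, Function.update_self]
        · rw [hX₁, Function.update_of_ne h]; exact hXle i
      · intro i
        by_cases h : i = a
        · rw [hY₁, h, Function.update_self]
        · rw [hY₁, Function.update_of_ne h]; exact hYle i
    exact le_trans step1 (le_trans step2 step3)

lemma condExp_mono {t : ℝ} (ht : t ∈ Set.Icc (0:ℝ) (1/2)) {S : Finset (Fin n)}
    {F : (Fin n → Bool) → (Fin n → Bool) → ℝ} (hFS : SIncreasing S F) :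
    Monotone (fun z : Fin n → Bool × Bool =>
      Ept n t (fun x y => F (ov1 S z x) (ov2 S z y))) := by
  intro z z' hzz
  dsimp only
  unfold Ept
  apply Finset.sum_le_sum
  intro x _
  apply Finset.sum_le_sum
  intro y _
  apply mul_le_mul_of_nonneg_left _ (flipWeight_nonneg ht x y)
  apply mono_aux hFS S (le_refl S)
  · intro i hi
    by_contra hiS
    exact hi (by simp [ov1, hiS])
  · intro i hi
    by_contra hiS
    exact hi (by simp [ov2, hiS])
  · intro i
    unfold ov1
    by_cases h : i ∈ S
    · simp only [h, if_true]
      exact (hzz i).1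
    · simp [h]
  · intro i
    unfold ov2
    by_cases h : i ∈ S
    · simp only [h, if_true]
      exact (hzz i).2
    · simp [h]

/-- The main lemma: FKG for nonnegative `S`-increasing functions. -/
lemma main_lemma {t : ℝ} (ht : t ∈ Set.Icc (0:ℝ) (1/2)) (A B S : Finset (Fin n))
    (hAB : Disjoint A B) (hAS : Disjoint A S) (hBS : Disjoint B S)
    (F G : (Fin n → Bool) → (Fin n → Bool) → ℝ)
    (hFdep : CoordDependsOn (A ∪ S) F) (hGdep : CoordDependsOn (B ∪ S) G)
    (hFS : SIncreasing S F) (hGS : SIncreasing S G)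
    (hF0 : ∀ x y, 0 ≤ F x y) (hG0 : ∀ x y, 0 ≤ G x y) :
    Ept n t F * Ept n t G ≤ Ept n t (fun x y => F x y * G x y) := by
  set f : (Fin n → Bool × Bool) → ℝ :=
    fun z => Ept n t (fun x y => F (ov1 S z x) (ov2 S z y)) with hf_def
  set g : (Fin n → Bool × Bool) → ℝ :=
    fun z => Ept n t (fun x y => G (ov1 S z x) (ov2 S z y)) with hg_def
  have hf0 : (0 : (Fin n → Bool × Bool) → ℝ) ≤ f := by
    intro z
    apply Finset.sum_nonneg; intro x _
    apply Finset.sum_nonneg; intro y _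
    exact mul_nonneg (flipWeight_nonneg ht x y) (hF0 _ _)
  have hg0 : (0 : (Fin n → Bool × Bool) → ℝ) ≤ g := by
    intro z
    apply Finset.sum_nonneg; intro x _
    apply Finset.sum_nonneg; intro y _
    exact mul_nonneg (flipWeight_nonneg ht x y) (hG0 _ _)
  have hμ0 : (0 : (Fin n → Bool × Bool) → ℝ) ≤ Mu t S := fun z => Mu_nonneg ht S z
  have hfg := fkg f g (Mu t S) hμ0 hf0 hg0 (condExp_mono ht hFS) (condExp_mono ht hGS)
    (fun a b => by rw [inf_comm, sup_comm, mul_comm]; exact Mu_supermod ht S b a)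
  rw [sum_Mu, one_mul] at hfg
  have e1 : ∑ z : Fin n → Bool × Bool, Mu t S z * f z = Ept n t F := key1 t S F
  have e2 : ∑ z : Fin n → Bool × Bool, Mu t S z * g z = Ept n t G := key1 t S G
  have e3 : ∑ z : Fin n → Bool × Bool, Mu t S z * (f z * g z)
      = Ept n t (fun x y => F x y * G x y) := by
    have hz : ∀ z : Fin n → Bool × Bool, f z * g z
        = Ept n t (fun x y => F (ov1 S z x) (ov2 S z y) * G (ov1 S z x) (ov2 S z y)) := by
      intro z
      rw [hf_def, hg_def]
      dsimp only
      rw [indep t A B hAB _ _ ?_ ?_]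
      · intro x y x' y' hxy
        apply hFdep
        intro i hi
        rcases Finset.mem_union.mp hi with hiA | hiS
        · have hiS' : i ∉ S := Finset.disjoint_left.mp hAS hiA
          constructor
          · show (if i ∈ S then (z i).1 else x i) = (if i ∈ S then (z i).1 else x' i)
            simp only [hiS', if_false]
            exact (hxy i hiA).1
          · show (if i ∈ S then (z i).2 else y i) = (if i ∈ S then (z i).2 else y' i)
            simp only [hiS', if_false]
            exact (hxy i hiA).2
        · constructor
          · show (if i ∈ S then (z i).1 else x i) = (if i ∈ S then (z i).1 else x' i)
            simp [hiS]
          · show (if i ∈ S then (z i).2 else y i) = (if i ∈ S then (z i).2 else y' i)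
            simp [hiS]
      · intro x y x' y' hxy
        apply hGdep
        intro i hi
        rcases Finset.mem_union.mp hi with hiB | hiS
        · have hiS' : i ∉ S := Finset.disjoint_left.mp hBS hiB
          constructor
          · show (if i ∈ S then (z i).1 else x i) = (if i ∈ S then (z i).1 else x' i)
            simp only [hiS', if_false]
            exact (hxy i hiB).1
          · show (if i ∈ S then (z i).2 else y i) = (if i ∈ S then (z i).2 else y' i)
            simp only [hiS', if_false]
            exact (hxy i hiB).2
        · constructor
          · show (if i ∈ S then (z i).1 else x i) = (if i ∈ S then (z i).1 else x' i)
            simp [hiS]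
          · show (if i ∈ S then (z i).2 else y i) = (if i ∈ S then (z i).2 else y' i)
            simp [hiS]
    calc ∑ z : Fin n → Bool × Bool, Mu t S z * (f z * g z)
        = ∑ z : Fin n → Bool × Bool, Mu t S z
            * Ept n t (fun x y => F (ov1 S z x) (ov2 S z y) * G (ov1 S z x) (ov2 S z y)) := by
          apply Finset.sum_congr rfl; intro z _; rw [hz z]
      _ = Ept n t (fun x y => F x y * G x y) := key1 t S (fun x y => F x y * G x y)
  rw [e1, e2, e3] at hfg
  exact hfg

/-- Negation of the coordinates in `T`. -/
def ng (T : Finset (Fin n)) (x : Fin n → Bool) : Fin n → Bool :=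
  fun i => if i ∈ T then !x i else x i

lemma ng_invol (T : Finset (Fin n)) (x : Fin n → Bool) : ng T (ng T x) = x := by
  funext i; by_cases h : i ∈ T <;> simp [ng, h]

lemma Ept_ng (t : ℝ) (T : Finset (Fin n)) (H : (Fin n → Bool) → (Fin n → Bool) → ℝ) :
    Ept n t (fun x y => H (ng T x) (ng T y)) = Ept n t H := by
  rw [Ept_eq, Ept_eq]
  have hbij : Function.Bijective
      (fun p : (Fin n → Bool) × (Fin n → Bool) => (ng T p.1, ng T p.2)) := by
    apply Function.Involutive.bijective
    intro p
    simp [ng_invol]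
  apply Fintype.sum_bijective _ hbij
  rintro ⟨x, y⟩
  show flipWeight n t x y * H (ng T x) (ng T y)
    = flipWeight n t (ng T x) (ng T y) * H (ng T x) (ng T y)
  congr 1
  rw [flipWeight_eq, flipWeight_eq]
  apply Finset.prod_congr rfl
  intro i _
  by_cases h : i ∈ T
  · simp only [ng, h, if_true]
    cases x i <;> cases y i <;> simp [u]
  · simp [ng, h]

lemma ng_update (T : Finset (Fin n)) (x : Fin n → Bool) (i : Fin n) (b : Bool) :
    ng T (update x i b) = update (ng T x) i (if i ∈ T then !b else b) := by
  funext j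
  by_cases h : j = i
  · subst h; simp [ng]
  · simp [ng, Function.update_of_ne h]

lemma SInc_ng {S T : Finset (Fin n)} {F : (Fin n → Bool) → (Fin n → Bool) → ℝ}
    (hST : Disjoint S T) (hFS : SIncreasing S F) (hFT : SDecreasing T F) :
    SIncreasing (S ∪ T) (fun x y => F (ng T x) (ng T y)) := by
  intro x y i hi
  by_cases hiT : i ∈ T
  · constructor
    · show F (ng T (update x i false)) (ng T y) ≤ F (ng T (update x i true)) (ng T y)
      rw [ng_update, ng_update]
      simp only [hiT, if_true, Bool.not_false, Bool.not_true]
      exact (hFT (ng T x) (ng T y) i hiT).1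
    · show F (ng T x) (ng T (update y i false)) ≤ F (ng T x) (ng T (update y i true))
      rw [ng_update, ng_update]
      simp only [hiT, if_true, Bool.not_false, Bool.not_true]
      exact (hFT (ng T x) (ng T y) i hiT).2
  · have hiS : i ∈ S := by
      rcases Finset.mem_union.mp hi with h | h
      · exact h
      · exact absurd h hiT
    constructor
    · show F (ng T (update x i false)) (ng T y) ≤ F (ng T (update x i true)) (ng T y)
      rw [ng_update, ng_update]
      simp only [hiT, if_false]
      exact (hFS (ng T x) (ng T y) i hiS).1
    · show F (ng T x) (ng T (update y i false)) ≤ F (ng T x) (ng T (update y i true))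
      rw [ng_update, ng_update]
      simp only [hiT, if_false]
      exact (hFS (ng T x) (ng T y) i hiS).2

lemma dep_ng {C T : Finset (Fin n)} {F : (Fin n → Bool) → (Fin n → Bool) → ℝ}
    (h : CoordDependsOn C F) : CoordDependsOn C (fun x y => F (ng T x) (ng T y)) := by
  intro x y x' y' hxy
  apply h
  intro i hi
  constructor
  · show (if i ∈ T then !x i else x i) = (if i ∈ T then !x' i else x' i)
    rw [(hxy i hi).1]
  · show (if i ∈ T then !y i else y i) = (if i ∈ T then !y' i else y' i)
    rw [(hxy i hi).2]

lemma Ept_add (t : ℝ) (H K : (Fin n → Bool) → (Fin n → Bool) → ℝ) :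
    Ept n t (fun x y => H x y + K x y) = Ept n t H + Ept n t K := by
  unfold Ept
  simp_rw [mul_add, Finset.sum_add_distrib]

lemma Ept_smul (t : ℝ) (c : ℝ) (H : (Fin n → Bool) → (Fin n → Bool) → ℝ) :
    Ept n t (fun x y => c * H x y) = c * Ept n t H := by
  unfold Ept
  simp_rw [Finset.mul_sum]
  congr 1; funext x; congr 1; funext y; ring

lemma Ept_const (t : ℝ) (c : ℝ) : Ept n t (fun _ _ => c) = c := by
  unfold Ept
  simp_rw [← Finset.sum_mul]
  rw [sum_flipWeight, one_mul]

end MFKG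

open MFKG in
/-- Mixed-monotone FKG for the noised pair. -/
theorem mixed_fkg_noised_pair {n : ℕ} (t : ℝ) (ht : t ∈ Set.Icc (0:ℝ) (1/2))
    (A B S T : Finset (Fin n))
    (hAB : Disjoint A B) (hAS : Disjoint A S) (hAT : Disjoint A T)
    (hBS : Disjoint B S) (hBT : Disjoint B T) (hST : Disjoint S T)
    (F G : (Fin n → Bool) → (Fin n → Bool) → ℝ)
    (hFdep : CoordDependsOn (A ∪ S ∪ T) F) (hGdep : CoordDependsOn (B ∪ S ∪ T) G)
    (hFS : SIncreasing S F) (hGS : SIncreasing S G)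
    (hFT : SDecreasing T F) (hGT : SDecreasing T G) :
    Ept n t (fun x y => F x y * G x y) ≥ Ept n t F * Ept n t G := by
  classical
  set F₁ : (Fin n → Bool) → (Fin n → Bool) → ℝ := fun x y => F (ng T x) (ng T y) with hF₁
  set G₁ : (Fin n → Bool) → (Fin n → Bool) → ℝ := fun x y => G (ng T x) (ng T y) with hG₁
  set cF : ℝ := ∑ x : Fin n → Bool, ∑ y : Fin n → Bool, |F₁ x y| with hcF
  set cG : ℝ := ∑ x : Fin n → Bool, ∑ y : Fin n → Bool, |G₁ x y| with hcG
  have habsF : ∀ x y : Fin n → Bool, |F₁ x y| ≤ cF := by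
    intro x y
    calc |F₁ x y| ≤ ∑ y' : Fin n → Bool, |F₁ x y'| :=
          Finset.single_le_sum (f := fun y' => |F₁ x y'|)
            (fun _ _ => abs_nonneg _) (Finset.mem_univ y)
      _ ≤ cF := Finset.single_le_sum
          (f := fun x' => ∑ y' : Fin n → Bool, |F₁ x' y'|)
          (fun _ _ => Finset.sum_nonneg fun _ _ => abs_nonneg _) (Finset.mem_univ x)
  have habsG : ∀ x y : Fin n → Bool, |G₁ x y| ≤ cG := by
    intro x y
    calc |G₁ x y| ≤ ∑ y' : Fin n → Bool, |G₁ x y'| :=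
          Finset.single_le_sum (f := fun y' => |G₁ x y'|)
            (fun _ _ => abs_nonneg _) (Finset.mem_univ y)
      _ ≤ cG := Finset.single_le_sum
          (f := fun x' => ∑ y' : Fin n → Bool, |G₁ x' y'|)
          (fun _ _ => Finset.sum_nonneg fun _ _ => abs_nonneg _) (Finset.mem_univ x)
  have hA' : Disjoint A (S ∪ T) := Finset.disjoint_union_right.mpr ⟨hAS, hAT⟩
  have hB' : Disjoint B (S ∪ T) := Finset.disjoint_union_right.mpr ⟨hBS, hBT⟩
  -- the shifted, negated functions
  have hmain := main_lemma ht A B (S ∪ T) hAB hA' hB'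
    (fun x y => F₁ x y + cF) (fun x y => G₁ x y + cG)
    ?_ ?_ ?_ ?_ ?_ ?_
  · -- derive the conclusion
    have eF : Ept n t (fun x y => F₁ x y + cF) = Ept n t F + cF := by
      rw [Ept_add]
      rw [Ept_const]
      rw [hF₁, Ept_ng]
    have eG : Ept n t (fun x y => G₁ x y + cG) = Ept n t G + cG := by
      rw [Ept_add, Ept_const, hG₁, Ept_ng]
    have eFG : Ept n t (fun x y => (F₁ x y + cF) * (G₁ x y + cG))
        = Ept n t (fun x y => F x y * G x y) + cG * Ept n t F + cF * Ept n t G + cF * cG := by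
      have hfun : (fun x y : Fin n → Bool => (F₁ x y + cF) * (G₁ x y + cG))
          = fun x y => ((F₁ x y * G₁ x y + cG * F₁ x y) + (cF * G₁ x y + cF * cG)) := by
        funext x y; ring
      rw [hfun, Ept_add, Ept_add, Ept_add, Ept_smul, Ept_smul, Ept_const]
      have h1 : Ept n t (fun x y => F₁ x y * G₁ x y) = Ept n t (fun x y => F x y * G x y) :=
        Ept_ng t T (fun x y => F x y * G x y)
      have h2 : Ept n t F₁ = Ept n t F := Ept_ng t T F
      have h3 : Ept n t G₁ = Ept n t G := Ept_ng t T G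
      rw [h1, h2, h3]
      ring
    rw [eF, eG, eFG] at hmain
    nlinarith [hmain]
  · -- CoordDependsOn (A ∪ (S ∪ T)) for the shifted F
    intro x y x' y' hxy
    have := dep_ng (T := T) hFdep x y x' y' (by rw [Finset.union_assoc]; exact hxy)
    show F (ng T x) (ng T y) + cF = F (ng T x') (ng T y') + cF
    dsimp only at this
    rw [this]
  · intro x y x' y' hxy
    have : (B ∪ S ∪ T) = B ∪ (S ∪ T) := Finset.union_assoc B S T
    have hdep := dep_ng (T := T) hGdep x y x' y' (by rw [this]; exact hxy)
    show G (ng T x) (ng T y) + cG = G (ng T x') (ng T y') + cG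
    dsimp only at hdep
    rw [hdep]
  · -- SIncreasing (S ∪ T) for the shifted F
    intro x y i hi
    refine ⟨add_le_add_left ?_ cF, add_le_add_left ?_ cF⟩
    · exact (SInc_ng hST hFS hFT x y i hi).1
    · exact (SInc_ng hST hFS hFT x y i hi).2
  · intro x y i hi
    refine ⟨add_le_add_left ?_ cG, add_le_add_left ?_ cG⟩
    · exact (SInc_ng hST hGS hGT x y i hi).1
    · exact (SInc_ng hST hGS hGT x y i hi).2
  · intro x y
    show 0 ≤ F₁ x y + cF
    have := habsF x y
    have := neg_abs_le (F₁ x y)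
    linarith
  · intro x y
    show 0 ≤ G₁ x y + cG
    have := habsG x y
    have := neg_abs_le (G₁ x y)
    linarith
end

section
/- If a sequence (α_k)_{k≥1} of positive reals satisfies the quasi-multiplicativity bounds c·α_k·α_{k,n} ≤ α_n ≤ α_k·α_{k,n} for all 1 ≤ k ≤ n (for some fixed constant c > 0 and nonnegative quantities α_{k,n}), and the lower bound α_{k,n} ≥ (k/n)^{2−c'} for some c' > 0, then there are constants c₁, C₁ > 0 such that for all n ≥ 1, c₁·n²·α_n ≤ ∑_{i=1}^n i·α_i ≤ C₁·n²·α_n. -/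
open Finset

lemma aux_rpow_step (p : ℝ) (hp0 : 0 < p) (hp1 : p ≤ 1) (i : ℕ) (hi : 1 ≤ i) :
    p * (i : ℝ) ^ (p - 1) ≤ (i : ℝ) ^ p - ((i : ℝ) - 1) ^ p := by
  rcases eq_or_lt_of_le hi with h1 | h2
  · subst h1
    simp only [Nat.cast_one, Real.one_rpow, sub_self, Real.zero_rpow hp0.ne', mul_one, sub_zero]
    linarith
  · -- 2 ≤ i, use MVT on [i-1, i]
    have h2' : (2 : ℕ) ≤ i := h2
    have ha : (1 : ℝ) ≤ (i : ℝ) - 1 := by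
      have : (2 : ℝ) ≤ (i : ℝ) := by exact_mod_cast h2'
      linarith
    have hab : (i : ℝ) - 1 < (i : ℝ) := by linarith
    have hcont : ContinuousOn (fun x : ℝ => x ^ p) (Set.Icc ((i : ℝ) - 1) (i : ℝ)) := by
      intro x hx
      have hx0 : x ≠ 0 := by have := hx.1; intro h; rw [h] at this; linarith
      exact (Real.continuousAt_rpow_const x p (Or.inl hx0)).continuousWithinAt
    have hdiff : DifferentiableOn ℝ (fun x : ℝ => x ^ p) (Set.Ioo ((i : ℝ) - 1) (i : ℝ)) := by
      intro x hx
      have hx0 : x ≠ 0 := by have := hx.1; intro h; rw [h] at this; linarith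
      exact (Real.hasDerivAt_rpow_const (p := p) (Or.inl hx0)).differentiableAt.differentiableWithinAt
    obtain ⟨ξ, hξ, hderiv⟩ := exists_deriv_eq_slope (fun x : ℝ => x ^ p) hab hcont hdiff
    have hξ0 : (0 : ℝ) < ξ := by have := hξ.1; linarith
    have hd : deriv (fun x : ℝ => x ^ p) ξ = p * ξ ^ (p - 1) :=
      Real.deriv_rpow_const ξ p
    rw [hd] at hderiv
    have hden : (i : ℝ) - ((i : ℝ) - 1) = 1 := by ring
    rw [hden, div_one] at hderiv
    rw [← hderiv]
    have : (i : ℝ) ^ (p - 1) ≤ ξ ^ (p - 1) :=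
      Real.rpow_le_rpow_of_nonpos hξ0 hξ.2.le (by linarith)
    nlinarith [hp0]

lemma aux_sum_rpow (p : ℝ) (hp0 : 0 < p) (hp1 : p ≤ 1) (n : ℕ) :
    ∑ i ∈ Finset.Icc 1 n, (i : ℝ) ^ (p - 1) ≤ (n : ℝ) ^ p / p := by
  induction n with
  | zero => simp [Real.zero_rpow hp0.ne']
  | succ n ih =>
    rw [Finset.sum_Icc_succ_top (by omega : 1 ≤ n + 1)]
    have hkey := aux_rpow_step p hp0 hp1 (n + 1) (by omega)
    have hcast : ((n + 1 : ℕ) : ℝ) - 1 = (n : ℝ) := by push_cast; ring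
    rw [hcast] at hkey
    have : ((n + 1 : ℕ) : ℝ) ^ (p - 1) ≤ (((n + 1 : ℕ) : ℝ) ^ p - (n : ℝ) ^ p) / p := by
      rw [le_div_iff₀ hp0]; linarith
    have h2 : (n : ℝ) ^ p / p + (((n + 1 : ℕ) : ℝ) ^ p - (n : ℝ) ^ p) / p
        = ((n + 1 : ℕ) : ℝ) ^ p / p := by ring
    linarith

lemma aux_sum_id (n : ℕ) : (n : ℝ) ^ 2 / 2 ≤ ∑ i ∈ Finset.Icc 1 n, (i : ℝ) := by
  induction n with
  | zero => simp
  | succ n ih =>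
    rw [Finset.sum_Icc_succ_top (by omega : 1 ≤ n + 1)]
    push_cast
    push_cast at ih
    nlinarith

/-- Abstract four-arm probability comparison: quasi-multiplicativity and a power-law
lower bound on `α_{k,n}` imply `∑_{i=1}^n i α_i ≍ n² α_n`. -/
theorem sum_four_arm_comparison
    (α : ℕ → ℝ) (β : ℕ → ℕ → ℝ) (c c' : ℝ) (hc : 0 < c) (hc' : 0 < c')
    (hαpos : ∀ n : ℕ, 1 ≤ n → 0 < α n)
    (hβpos : ∀ k n : ℕ, 1 ≤ k → k ≤ n → 0 < β k n)
    (hβle : ∀ k n : ℕ, 1 ≤ k → k ≤ n → β k n ≤ 1)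
    (hquasi₁ : ∀ k n : ℕ, 1 ≤ k → k ≤ n → c * (α k * β k n) ≤ α n)
    (hquasi₂ : ∀ k n : ℕ, 1 ≤ k → k ≤ n → α n ≤ α k * β k n)
    (hlower : ∀ k n : ℕ, 1 ≤ k → k ≤ n → ((k : ℝ) / n) ^ ((2 : ℝ) - c') ≤ β k n) :
    ∃ c₁ C₁ : ℝ, 0 < c₁ ∧ 0 < C₁ ∧ ∀ n : ℕ, 1 ≤ n →
      c₁ * n ^ 2 * α n ≤ (∑ i ∈ Finset.Icc 1 n, (i : ℝ) * α i) ∧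
      (∑ i ∈ Finset.Icc 1 n, (i : ℝ) * α i) ≤ C₁ * n ^ 2 * α n := by
  set p : ℝ := min c' 1 with hp_def
  have hp0 : 0 < p := lt_min hc' one_pos
  have hp1 : p ≤ 1 := min_le_right _ _
  refine ⟨1 / 2, 1 / (c * p), by norm_num, by positivity, fun n hn => ?_⟩
  have hn0 : (0 : ℝ) < (n : ℝ) := by exact_mod_cast hn
  have hαn := hαpos n hn
  constructor
  · -- lower bound
    have hterm : ∀ i ∈ Finset.Icc 1 n, (i : ℝ) * α n ≤ (i : ℝ) * α i := by
      intro i hi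
      rw [Finset.mem_Icc] at hi
      have hi0 : (0 : ℝ) ≤ (i : ℝ) := by positivity
      have : α n ≤ α i := by
        calc α n ≤ α i * β i n := hquasi₂ i n hi.1 hi.2
          _ ≤ α i * 1 := by
              exact mul_le_mul_of_nonneg_left (hβle i n hi.1 hi.2) (hαpos i hi.1).le
          _ = α i := mul_one _
      exact mul_le_mul_of_nonneg_left this hi0
    calc (1 / 2) * (n : ℝ) ^ 2 * α n = ((n : ℝ) ^ 2 / 2) * α n := by ring
      _ ≤ (∑ i ∈ Finset.Icc 1 n, (i : ℝ)) * α n :=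
          mul_le_mul_of_nonneg_right (aux_sum_id n) hαn.le
      _ = ∑ i ∈ Finset.Icc 1 n, (i : ℝ) * α n := by rw [Finset.sum_mul]
      _ ≤ ∑ i ∈ Finset.Icc 1 n, (i : ℝ) * α i := Finset.sum_le_sum hterm
  · -- upper bound
    have hterm : ∀ i ∈ Finset.Icc 1 n, (i : ℝ) * α i ≤
        (α n / c) * ((n : ℝ) ^ ((2 : ℝ) - p) * (i : ℝ) ^ (p - 1)) := by
      intro i hi
      rw [Finset.mem_Icc] at hi
      have hi0 : (0 : ℝ) < (i : ℝ) := by exact_mod_cast hi.1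
      have hin : (i : ℝ) / n ≤ 1 := by
        rw [div_le_one hn0]; exact_mod_cast hi.2
      have hin0 : (0 : ℝ) < (i : ℝ) / n := by positivity
      have hmono : ((i : ℝ) / n) ^ ((2 : ℝ) - p) ≤ ((i : ℝ) / n) ^ ((2 : ℝ) - c') := by
        apply Real.rpow_le_rpow_of_exponent_ge hin0 hin
        have : p ≤ c' := min_le_left _ _
        linarith
      have hβ : ((i : ℝ) / n) ^ ((2 : ℝ) - p) ≤ β i n :=
        le_trans hmono (hlower i n hi.1 hi.2)
      have hq : c * (α i * ((i : ℝ) / n) ^ ((2 : ℝ) - p)) ≤ α n := by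
        calc c * (α i * ((i : ℝ) / n) ^ ((2 : ℝ) - p)) ≤ c * (α i * β i n) := by
              apply mul_le_mul_of_nonneg_left _ hc.le
              exact mul_le_mul_of_nonneg_left hβ (hαpos i hi.1).le
          _ ≤ α n := hquasi₁ i n hi.1 hi.2
      have hr0 : (0 : ℝ) < ((i : ℝ) / n) ^ ((2 : ℝ) - p) := Real.rpow_pos_of_pos hin0 _
      have hαi : α i ≤ α n / (c * ((i : ℝ) / n) ^ ((2 : ℝ) - p)) := by
        rw [le_div_iff₀ (by positivity)]
        calc α i * (c * ((i : ℝ) / n) ^ ((2 : ℝ) - p))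
            = c * (α i * ((i : ℝ) / n) ^ ((2 : ℝ) - p)) := by ring
          _ ≤ α n := hq
      have hrw : (i : ℝ) * (α n / (c * ((i : ℝ) / n) ^ ((2 : ℝ) - p)))
          = (α n / c) * ((n : ℝ) ^ ((2 : ℝ) - p) * (i : ℝ) ^ (p - 1)) := by
        rw [Real.div_rpow hi0.le hn0.le]
        have hCA : (i : ℝ) ^ (p - 1) * (i : ℝ) ^ ((2 : ℝ) - p) = (i : ℝ) := by
          rw [← Real.rpow_add hi0]; norm_num
        have hA := (Real.rpow_pos_of_pos hi0 ((2 : ℝ) - p)).ne'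
        have hB := (Real.rpow_pos_of_pos hn0 ((2 : ℝ) - p)).ne'
        field_simp
        linear_combination (-1 : ℝ) * hCA
      calc (i : ℝ) * α i ≤ (i : ℝ) * (α n / (c * ((i : ℝ) / n) ^ ((2 : ℝ) - p))) :=
            mul_le_mul_of_nonneg_left hαi hi0.le
        _ = (α n / c) * ((n : ℝ) ^ ((2 : ℝ) - p) * (i : ℝ) ^ (p - 1)) := hrw
    have hsum := Finset.sum_le_sum hterm
    have hsum2 : ∑ i ∈ Finset.Icc 1 n, (α n / c) * ((n : ℝ) ^ ((2 : ℝ) - p) * (i : ℝ) ^ (p - 1))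
        = (α n / c) * (n : ℝ) ^ ((2 : ℝ) - p) * ∑ i ∈ Finset.Icc 1 n, (i : ℝ) ^ (p - 1) := by
      rw [Finset.mul_sum]
      apply Finset.sum_congr rfl
      intro i _; ring
    have hfinal : (α n / c) * (n : ℝ) ^ ((2 : ℝ) - p) * ((n : ℝ) ^ p / p)
        = 1 / (c * p) * (n : ℝ) ^ 2 * α n := by
      rw [show ((2 : ℝ) - p) = 2 - p from rfl]
      have : (n : ℝ) ^ ((2 : ℝ) - p) * (n : ℝ) ^ p = (n : ℝ) ^ 2 := by
        rw [← Real.rpow_add hn0]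
        norm_num
      field_simp
      nlinarith [this]
    calc (∑ i ∈ Finset.Icc 1 n, (i : ℝ) * α i)
        ≤ (α n / c) * (n : ℝ) ^ ((2 : ℝ) - p) * ∑ i ∈ Finset.Icc 1 n, (i : ℝ) ^ (p - 1) := by
          rw [← hsum2]; exact hsum
      _ ≤ (α n / c) * (n : ℝ) ^ ((2 : ℝ) - p) * ((n : ℝ) ^ p / p) := by
          apply mul_le_mul_of_nonneg_left (aux_sum_rpow p hp0 hp1 n)
          positivity
      _ = 1 / (c * p) * (n : ℝ) ^ 2 * α n := hfinal
end
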